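/- Let a_0, a_1 : ℕ → ℝ and ε_0, ε_1 : ℕ → ℝ be sequences satisfying, for all n ≥ 1 and i ∈ {0,1}, the recurrence a_i(n) = E[a_0(I_n^i)] + E[a_1(n − I_n^i)] + ε_i(n), where I_n^i is a binomial B(n, p_{i0}) random variable. If ε_i(n) = c_i n + O(n^α) as n → ∞ for constants c_0, c_1 ∈ ℝ and some α < 1, for both i ∈ {0,1}, then a_i(n) = ((π_0 c_0 + π_1 c_1)/H) · n log n + O(n) as n → ∞, for both i ∈ {0,1}. -/

import Mathlib

/-!
Subtract `C n log n + b_i n` from `a_i`, where `C = (π ⬝ c) / H` and `b` solves the Poisson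
equation `(I - P) b = c - C H_•` of the chain, which is solvable because `π ⬝ (c - C H_•) = 0`.
What remains has toll `O(n ^ γ)` with `γ < 1`: the toll of `n log n` is `H_i n + O(1)`, since
`x log x` lies between its tangent at the mean `n p` and that tangent plus `(x - n p) ^ 2 / (n p)`,
whose binomial expectation is `1 - p`.

A sequence whose toll is `O(n ^ γ)` is `O(n)`: by strong induction it stays below `K n - M n ^ β`
for some `β ∈ [γ, 1)`, because splitting `n` binomially gains a constant factor on `n ^ β`,
`E[k ^ β + (n - k) ^ β] ≥ (1 + (1 - β) p (1 - p)) n ^ β` for `n ≥ 2`, a consequence of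
`u ^ β ≥ u + (1 - β) u (1 - u)` on `[0, 1]`.
-/

open Filter Asymptotics Real

/-- Expectation of `a` under the binomial distribution `B(n, p)`. -/
noncomputable def binomExp (p : ℝ) (n : ℕ) (a : ℕ → ℝ) : ℝ :=
  ∑ k ∈ Finset.range (n + 1), (n.choose k : ℝ) * p ^ k * (1 - p) ^ (n - k) * a k

lemma mul_log_ge_tangent {m x : ℝ} (hm : 0 < m) (hx : 0 ≤ x) :
    m * log m + (log m + 1) * (x - m) ≤ x * log x := by
  rcases hx.eq_or_lt with rfl | hx
  · rw [zero_mul]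
    linarith
  · have h := log_le_sub_one_of_pos (div_pos hm hx)
    rw [log_div hm.ne' hx.ne'] at h
    have key : x * (m / x - 1) = m - x := by field_simp
    nlinarith

lemma mul_log_le_tangent_add_sq {m x : ℝ} (hm : 0 < m) (hx : 0 ≤ x) :
    x * log x ≤ m * log m + (log m + 1) * (x - m) + m⁻¹ * (x - m) ^ 2 := by
  rcases hx.eq_or_lt with rfl | hx
  · have hm' : m⁻¹ * (0 - m) ^ 2 = m := by field_simp; ring
    rw [zero_mul, hm']
    linarith
  · have h := log_le_sub_one_of_pos (div_pos hx hm)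
    rw [log_div hx.ne' hm.ne'] at h
    have key : m⁻¹ * (x - m) ^ 2 = x * (x / m - 1) - (x - m) := by field_simp
    nlinarith

lemma add_mul_mul_sub_le_rpow {u β : ℝ} (hu : 0 ≤ u) (hβ : β ≤ 1) :
    u + (1 - β) * u * (1 - u) ≤ u ^ β := by
  rcases hu.eq_or_lt with rfl | hu
  · simpa using rpow_nonneg le_rfl β
  · have hexp : 1 + (1 - β) * (1 - u) ≤ u ^ (β - 1) := by
      rw [rpow_def_of_pos hu]
      have := log_le_sub_one_of_pos hu
      nlinarith [add_one_le_exp (log u * (β - 1))]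
    calc u + (1 - β) * u * (1 - u) = u * (1 + (1 - β) * (1 - u)) := by ring
      _ ≤ u * u ^ (β - 1) := mul_le_mul_of_nonneg_left hexp hu.le
      _ = u ^ β := by rw [rpow_sub_one hu.ne', mul_div_cancel₀ _ hu.ne']

lemma rpow_mul_one_add_le_rpow_add_rpow {x y β : ℝ} (hx : 0 ≤ x) (hy : 0 ≤ y) (hxy : 0 < x + y)
    (hβ : β ≤ 1) :
    (x + y) ^ β * (1 + 2 * (1 - β) * x * y / (x + y) ^ 2) ≤ x ^ β + y ^ β := by
  have hu := add_mul_mul_sub_le_rpow (div_nonneg hx hxy.le) hβ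
  have hv := add_mul_mul_sub_le_rpow (div_nonneg hy hxy.le) hβ
  rw [div_rpow hx hxy.le, le_div_iff₀ (rpow_pos_of_pos hxy β)] at hu
  rw [div_rpow hy hxy.le, le_div_iff₀ (rpow_pos_of_pos hxy β)] at hv
  have hys : y / (x + y) = 1 - x / (x + y) := by field_simp; ring
  calc (x + y) ^ β * (1 + 2 * (1 - β) * x * y / (x + y) ^ 2)
      = (x / (x + y) + (1 - β) * (x / (x + y)) * (1 - x / (x + y))) * (x + y) ^ β +
          (y / (x + y) + (1 - β) * (y / (x + y)) * (1 - y / (x + y))) * (x + y) ^ β := by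
        rw [hys]; field_simp; ring
    _ ≤ x ^ β + y ^ β := add_le_add hu hv

lemma isBigO_natCast_rpow_rpow {α γ : ℝ} (h : α ≤ γ) :
    (fun n : ℕ => (n : ℝ) ^ α) =O[atTop] fun n => (n : ℝ) ^ γ := by
  refine Eventually.isBigO ?_
  filter_upwards [eventually_ge_atTop 1] with n hn
  have hn : (1 : ℝ) ≤ n := by exact_mod_cast hn
  rw [norm_of_nonneg (rpow_nonneg n.cast_nonneg α)]
  exact rpow_le_rpow_of_exponent_le hn h

lemma pow_add_one_sub_pow_le {p : ℝ} {n : ℕ} (hp : p ∈ Set.Icc (0 : ℝ) 1) (hn : 2 ≤ n) :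
    p ^ n + (1 - p) ^ n ≤ 1 - 2 * (p * (1 - p)) := by
  have h1 : p ^ n ≤ p ^ 2 := pow_le_pow_of_le_one hp.1 hp.2 hn
  have h2 : (1 - p) ^ n ≤ (1 - p) ^ 2 :=
    pow_le_pow_of_le_one (sub_nonneg.2 hp.2) (by linarith [hp.1]) hn
  nlinarith

section binomExp

variable {p : ℝ} {n : ℕ}

lemma binomExp_eq_sum_bernstein (p : ℝ) (n : ℕ) (f : ℕ → ℝ) :
    binomExp p n f = ∑ k ∈ Finset.range (n + 1), (bernsteinPolynomial ℝ n k).eval p * f k := by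
  simp [binomExp, bernsteinPolynomial]

lemma binomExp_congr {f g : ℕ → ℝ} (h : ∀ k ≤ n, f k = g k) :
    binomExp p n f = binomExp p n g :=
  Finset.sum_congr rfl fun k hk => by rw [h k (Nat.lt_succ_iff.mp (Finset.mem_range.mp hk))]

lemma binomExp_add (f g : ℕ → ℝ) :
    binomExp p n (fun k => f k + g k) = binomExp p n f + binomExp p n g := by
  simp only [binomExp, mul_add, Finset.sum_add_distrib]

lemma binomExp_sub (f g : ℕ → ℝ) :
    binomExp p n (fun k => f k - g k) = binomExp p n f - binomExp p n g := by
  simp only [binomExp, mul_sub, Finset.sum_sub_distrib]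

lemma binomExp_const_mul (c : ℝ) (f : ℕ → ℝ) :
    binomExp p n (fun k => c * f k) = c * binomExp p n f := by
  simp only [binomExp, Finset.mul_sum]
  exact Finset.sum_congr rfl fun _ _ => by ring

lemma binomExp_const (p : ℝ) (n : ℕ) (c : ℝ) : binomExp p n (fun _ => c) = c := by
  have h := congrArg (Polynomial.eval p) (bernsteinPolynomial.sum ℝ n)
  rw [Polynomial.eval_finsetSum, Polynomial.eval_one] at h
  rw [binomExp_eq_sum_bernstein, ← Finset.sum_mul, h, one_mul]

lemma binomExp_natCast (p : ℝ) (n : ℕ) : binomExp p n (fun k => (k : ℝ)) = n * p := by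
  have h := congrArg (Polynomial.eval p) (bernsteinPolynomial.sum_smul ℝ n)
  simp only [Polynomial.eval_finsetSum, nsmul_eq_mul, Polynomial.eval_mul, Polynomial.eval_natCast,
    Polynomial.eval_X] at h
  rw [binomExp_eq_sum_bernstein, ← h]
  exact Finset.sum_congr rfl fun _ _ => mul_comm _ _

lemma binomExp_variance (p : ℝ) (n : ℕ) :
    binomExp p n (fun k => ((k : ℝ) - n * p) ^ 2) = n * p * (1 - p) := by
  have h := congrArg (Polynomial.eval p) (bernsteinPolynomial.variance ℝ n)
  simp only [Polynomial.eval_finsetSum, Polynomial.eval_mul, Polynomial.eval_pow,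
    Polynomial.eval_sub, Polynomial.eval_X, nsmul_eq_mul, Polynomial.eval_natCast,
    Polynomial.eval_one] at h
  rw [binomExp_eq_sum_bernstein, ← h]
  exact Finset.sum_congr rfl fun _ _ => by ring

lemma binomExp_mul_sub (p : ℝ) (n : ℕ) :
    binomExp p n (fun k => (k : ℝ) * ((n - k : ℕ) : ℝ)) = n * (n - 1) * p * (1 - p) := by
  have h : binomExp p n (fun k => (k : ℝ) * ((n - k : ℕ) : ℝ)) =
      binomExp p n (fun k => (n - 2 * n * p) * k + ((n * p) ^ 2 - ((k : ℝ) - n * p) ^ 2)) :=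
    binomExp_congr fun k hk => by rw [Nat.cast_sub hk]; ring
  rw [h, binomExp_add, binomExp_const_mul, binomExp_sub, binomExp_const, binomExp_natCast,
    binomExp_variance]
  ring

lemma binomExp_weight_nonneg (hp : p ∈ Set.Icc (0 : ℝ) 1) (k : ℕ) :
    0 ≤ (n.choose k : ℝ) * p ^ k * (1 - p) ^ (n - k) := by
  have : 0 ≤ 1 - p := sub_nonneg.2 hp.2
  have := hp.1
  positivity

lemma binomExp_mono (hp : p ∈ Set.Icc (0 : ℝ) 1) {f g : ℕ → ℝ} (h : ∀ k ≤ n, f k ≤ g k) :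
    binomExp p n f ≤ binomExp p n g :=
  Finset.sum_le_sum fun k hk => mul_le_mul_of_nonneg_left
    (h k (Nat.lt_succ_iff.mp (Finset.mem_range.mp hk))) (binomExp_weight_nonneg hp k)

lemma abs_binomExp_le (hp : p ∈ Set.Icc (0 : ℝ) 1) (f : ℕ → ℝ) :
    |binomExp p n f| ≤ binomExp p n (fun k => |f k|) := by
  refine (Finset.abs_sum_le_sum_abs _ _).trans_eq (Finset.sum_congr rfl fun k _ => ?_)
  rw [abs_mul, abs_of_nonneg (binomExp_weight_nonneg hp k)]

lemma binomExp_ite_zero (p : ℝ) (n : ℕ) (c : ℝ) :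
    binomExp p n (fun k => if k = 0 then c else 0) = (1 - p) ^ n * c := by
  rw [binomExp, Finset.sum_eq_single_of_mem 0 (by simp) fun k _ hk => by simp [hk]]
  simp

lemma binomExp_ite_self (p : ℝ) (n : ℕ) (c : ℝ) :
    binomExp p n (fun k => if k = n then c else 0) = p ^ n * c := by
  rw [binomExp, Finset.sum_eq_single_of_mem n (by simp) fun k _ hk => by simp [hk]]
  simp

lemma binomExp_comp_sub (p : ℝ) (n : ℕ) (f : ℕ → ℝ) :
    binomExp p n (fun k => f (n - k)) = binomExp (1 - p) n f := by
  rw [binomExp, ← Finset.sum_range_reflect]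
  refine Finset.sum_congr rfl fun k hk => ?_
  have hk : k ≤ n := Nat.lt_succ_iff.mp (Finset.mem_range.mp hk)
  rw [add_tsub_cancel_right, Nat.sub_sub_self hk, Nat.choose_symm hk, sub_sub_cancel]
  ring

lemma binomExp_mul_log_mem_Icc (hp : p ∈ Set.Ioo (0 : ℝ) 1) (hn : 1 ≤ n) :
    binomExp p n (fun k => k * log k) ∈
      Set.Icc (n * p * log (n * p)) (n * p * log (n * p) + (1 - p)) := by
  have hm : 0 < (n : ℝ) * p := mul_pos (by exact_mod_cast hn) hp.1
  have hp' : p ∈ Set.Icc (0 : ℝ) 1 := Set.Ioo_subset_Icc_self hp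
  constructor
  · calc (n : ℝ) * p * log (n * p)
        = binomExp p n (fun k => n * p * log (n * p) + (log (n * p) + 1) * (k - n * p)) := by
          simp only [binomExp_add, binomExp_const_mul, binomExp_sub, binomExp_const,
            binomExp_natCast, sub_self, mul_zero, add_zero]
      _ ≤ _ := binomExp_mono hp' fun k _ => mul_log_ge_tangent hm k.cast_nonneg
  · calc binomExp p n (fun k => k * log k)
        ≤ binomExp p n (fun k => n * p * log (n * p) + (log (n * p) + 1) * (k - n * p) +
            (n * p)⁻¹ * (k - n * p) ^ 2) :=
          binomExp_mono hp' fun k _ => mul_log_le_tangent_add_sq hm k.cast_nonneg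
      _ = n * p * log (n * p) + (1 - p) := by
          simp only [binomExp_add, binomExp_const_mul, binomExp_sub, binomExp_const,
            binomExp_natCast, binomExp_variance]
          have hp0 : p ≠ 0 := hp.1.ne'
          field_simp
          ring

lemma mul_log_sub_binomExp_mem_Icc (hp : p ∈ Set.Ioo (0 : ℝ) 1) (hn : 1 ≤ n) :
    n * log n - binomExp p n (fun k => k * log k) - binomExp (1 - p) n (fun k => k * log k) ∈
      Set.Icc (binEntropy p * n - 1) (binEntropy p * n) := by
  have hq : 1 - p ∈ Set.Ioo (0 : ℝ) 1 := ⟨by linarith [hp.2], by linarith [hp.1]⟩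
  obtain ⟨hl, hu⟩ := binomExp_mul_log_mem_Icc hp hn
  obtain ⟨hl', hu'⟩ := binomExp_mul_log_mem_Icc hq hn
  have hn0 : (n : ℝ) ≠ 0 := by positivity
  rw [log_mul hn0 hp.1.ne'] at hl hu
  rw [log_mul hn0 hq.1.ne'] at hl' hu'
  simp only [binEntropy, log_inv]
  constructor <;> nlinarith

lemma rpow_mul_le_binomExp_rpow_add_rpow {β : ℝ} (hp : p ∈ Set.Icc (0 : ℝ) 1) (hβ : β ≤ 1)
    (hn : 2 ≤ n) :
    (n : ℝ) ^ β * (1 + (1 - β) * (p * (1 - p))) ≤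
      binomExp p n (fun k => (k : ℝ) ^ β + ((n - k : ℕ) : ℝ) ^ β) := by
  have hn2 : (2 : ℝ) ≤ n := by exact_mod_cast hn
  have hn0 : (0 : ℝ) < n := by linarith
  have hpq : 0 ≤ p * (1 - p) := mul_nonneg hp.1 (sub_nonneg.2 hp.2)
  have hβ' : 0 ≤ 1 - β := sub_nonneg.2 hβ
  have hgap : (1 - β) * (p * (1 - p)) ≤ 2 * (1 - β) / n ^ 2 * (n * (n - 1) * p * (1 - p)) := by
    have hn1 : (1 : ℝ) ≤ 2 * (n - 1) / n := by rw [le_div_iff₀ hn0]; linarith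
    have e : 2 * (1 - β) / n ^ 2 * (n * (n - 1) * p * (1 - p)) =
        (1 - β) * (p * (1 - p)) * (2 * (n - 1) / n) := by field_simp
    rw [e]
    exact le_mul_of_one_le_right (mul_nonneg hβ' hpq) hn1
  calc (n : ℝ) ^ β * (1 + (1 - β) * (p * (1 - p)))
      ≤ (n : ℝ) ^ β * (1 + 2 * (1 - β) / n ^ 2 * (n * (n - 1) * p * (1 - p))) :=
        mul_le_mul_of_nonneg_left (by linarith) (rpow_nonneg hn0.le β)
    _ = binomExp p n (fun k => (n : ℝ) ^ β * (1 + 2 * (1 - β) / n ^ 2 *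
          ((k : ℝ) * ((n - k : ℕ) : ℝ)))) := by
        rw [binomExp_const_mul, binomExp_add, binomExp_const, binomExp_const_mul, binomExp_mul_sub]
    _ ≤ _ := binomExp_mono hp fun k hk => by
        have h := rpow_mul_one_add_le_rpow_add_rpow k.cast_nonneg (n - k).cast_nonneg
          (by rw [← Nat.cast_add, Nat.add_sub_cancel' hk]; exact hn0) hβ
        rw [← Nat.cast_add, Nat.add_sub_cancel' hk] at h
        convert h using 3
        ring

section linearBound

variable {G : ℕ → ℝ} {ρ A γ β K M : ℝ}

lemma le_mul_sub_rpow_of_le_binomExp (hn : 2 ≤ n) (hρ : 0 < ρ) (hρp : ρ ≤ p * (1 - p))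
    (hβ0 : 0 < β) (hβ1 : β < 1) (hγβ : γ ≤ β) (hM : |G 0| + |A| ≤ M * ((1 - β) * ρ))
    (ih : ∀ k, 1 ≤ k → k < n → G k ≤ K * k - M * (k : ℝ) ^ β)
    (hGn : G n ≤ binomExp p n (fun k => G k + G (n - k)) + A * (n : ℝ) ^ γ) :
    G n ≤ K * n - M * (n : ℝ) ^ β := by
  have hp : p ∈ Set.Icc (0 : ℝ) 1 := by constructor <;> nlinarith
  have hn1 : (1 : ℝ) ≤ n := by exact_mod_cast one_le_two.trans hn
  have hM0 : 0 ≤ M := nonneg_of_mul_nonneg_left ((by positivity : 0 ≤ |G 0| + |A|).trans hM)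
    (by nlinarith)
  -- `G n` itself occurs in the terms `k = 0` and `k = n`, where `ih` does not apply; they carry the
  -- excess of `G n` over its bound, which has total weight `p ^ n + (1 - p) ^ n < 1`
  have hpoint : ∀ k ≤ n, G k + G (n - k) ≤ (K * n - M * ((k : ℝ) ^ β + ((n - k : ℕ) : ℝ) ^ β)) +
      ((if k = 0 then G 0 + G n - (K * n - M * (n : ℝ) ^ β) else 0) +
        (if k = n then G 0 + G n - (K * n - M * (n : ℝ) ^ β) else 0)) := by
    intro k hk
    rcases Nat.eq_zero_or_pos k with rfl | hk0
    · simp only [↓reduceIte, if_neg (by omega : (0 : ℕ) ≠ n), Nat.sub_zero, Nat.cast_zero,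
        zero_rpow hβ0.ne']
      linarith
    rcases hk.eq_or_lt with rfl | hkn
    · simp only [↓reduceIte, if_neg hk0.ne', Nat.sub_self, Nat.cast_zero, zero_rpow hβ0.ne']
      linarith
    have h1 := ih k hk0 hkn
    have h2 := ih (n - k) (by omega) (by omega)
    rw [Nat.cast_sub hk] at h2 ⊢
    simp only [hk0.ne', hkn.ne, if_false, add_zero]
    linarith
  have hgain := rpow_mul_le_binomExp_rpow_add_rpow hp hβ1.le hn
  set s := p ^ n + (1 - p) ^ n
  have hs : s ≤ 1 - 2 * ρ := (pow_add_one_sub_pow_le hp hn).trans (by linarith)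
  have hs0 : 0 ≤ s := by have := hp.1; have := hp.2; positivity
  have hE := binomExp_mono hp hpoint
  simp only [binomExp_add, binomExp_sub, binomExp_const, binomExp_const_mul, binomExp_ite_zero,
    binomExp_ite_self] at hE hGn hgain
  have hstep : (1 - s) * (G n - (K * n - M * (n : ℝ) ^ β)) ≤
      s * G 0 + A * (n : ℝ) ^ γ - M * ((1 - β) * ρ) * (n : ℝ) ^ β := by
    have hρgain : M * ((1 - β) * ρ) * (n : ℝ) ^ β ≤ M * ((1 - β) * (p * (1 - p))) * (n : ℝ) ^ β :=
      mul_le_mul_of_nonneg_right (mul_le_mul_of_nonneg_left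
        (mul_le_mul_of_nonneg_left hρp (sub_nonneg.2 hβ1.le)) hM0) (rpow_nonneg n.cast_nonneg β)
    linear_combination hGn + hE + mul_le_mul_of_nonneg_left hgain hM0 + hρgain
  have hnβ : 1 ≤ (n : ℝ) ^ β := one_le_rpow hn1 hβ0.le
  have hG0 : s * G 0 ≤ |G 0| * (n : ℝ) ^ β := by
    nlinarith [le_abs_self (G 0), abs_nonneg (G 0), neg_abs_le (G 0)]
  have hA : A * (n : ℝ) ^ γ ≤ |A| * (n : ℝ) ^ β :=
    (mul_le_mul_of_nonneg_right (le_abs_self A) (by positivity)).trans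
      (mul_le_mul_of_nonneg_left (rpow_le_rpow_of_exponent_le hn1 hγβ) (abs_nonneg A))
  have hMβ := mul_le_mul_of_nonneg_right hM (by positivity : (0 : ℝ) ≤ (n : ℝ) ^ β)
  nlinarith

lemma exists_le_mul_of_le_binomExp (hρ : 0 < ρ) (hγ : γ < 1)
    (hG : ∀ᶠ n in atTop, ∃ p, ρ ≤ p * (1 - p) ∧
      G n ≤ binomExp p n (fun k => G k + G (n - k)) + A * (n : ℝ) ^ γ) :
    ∃ K, ∀ n, 1 ≤ n → G n ≤ K * n := by
  obtain ⟨N, hN⟩ := eventually_atTop.1 hG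
  set β := max γ (1 / 2)
  have hβ0 : 0 < β := lt_max_of_lt_right one_half_pos
  have hβ1 : β < 1 := max_lt hγ one_half_lt_one
  set M := (|G 0| + |A|) / ((1 - β) * ρ)
  have hδ : 0 < (1 - β) * ρ := mul_pos (by linarith) hρ
  have hM : |G 0| + |A| ≤ M * ((1 - β) * ρ) := (div_mul_cancel₀ _ hδ.ne').ge
  have hM0 : 0 ≤ M := by positivity
  set S := ∑ m ∈ Finset.range (max N 2), |G m|
  have key : ∀ n, 1 ≤ n → G n ≤ (M + S) * n - M * (n : ℝ) ^ β := by
    intro n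
    induction n using Nat.strong_induction_on with
    | _ n ih =>
    intro hn
    rcases lt_or_ge n (max N 2) with hlt | hge
    · have h1 : G n ≤ S := (le_abs_self _).trans
        (Finset.single_le_sum (fun m _ => abs_nonneg (G m)) (Finset.mem_range.2 hlt))
      have hn1 : (1 : ℝ) ≤ n := by exact_mod_cast hn
      have h2 : (n : ℝ) ^ β ≤ n := rpow_le_self_of_one_le hn1 hβ1.le
      have h3 : 0 ≤ S := Finset.sum_nonneg fun m _ => abs_nonneg (G m)
      nlinarith
    · obtain ⟨p, hρp, hGn⟩ := hN n (le_of_max_le_left hge)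
      exact le_mul_sub_rpow_of_le_binomExp (le_of_max_le_right hge) hρ hρp hβ0 hβ1
        (le_max_left _ _) hM (fun k hk hkn => ih k hkn hk) hGn
  refine ⟨M + S, fun n hn => (key n hn).trans ?_⟩
  have := rpow_nonneg (Nat.cast_nonneg n) β
  nlinarith

end linearBound

end binomExp

noncomputable def toll (q : Fin 2 → ℝ) (a : Fin 2 → ℕ → ℝ) (i : Fin 2) (n : ℕ) : ℝ :=
  a i n - binomExp (q i) n (a 0) - binomExp (q i) n (fun k => a 1 (n - k))

section toll

variable {q : Fin 2 → ℝ} {i : Fin 2} {n : ℕ}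

lemma toll_sub (a b : Fin 2 → ℕ → ℝ) :
    toll q (fun j n => a j n - b j n) i n = toll q a i n - toll q b i n := by
  simp only [toll, binomExp_sub]; ring

lemma toll_add (a b : Fin 2 → ℕ → ℝ) :
    toll q (fun j n => a j n + b j n) i n = toll q a i n + toll q b i n := by
  simp only [toll, binomExp_add]; ring

lemma toll_const_mul (C : ℝ) (a : Fin 2 → ℕ → ℝ) :
    toll q (fun j n => C * a j n) i n = C * toll q a i n := by
  simp only [toll, binomExp_const_mul]; ring

lemma toll_mul_log_sub_isBigO_one (hq : q i ∈ Set.Ioo (0 : ℝ) 1) :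
    (fun n => toll q (fun _ n => n * log n) i n - binEntropy (q i) * n) =O[atTop]
      fun _ => (1 : ℝ) := by
  refine IsBigO.of_bound 1 ?_
  filter_upwards [eventually_ge_atTop 1] with n hn
  obtain ⟨h1, h2⟩ := mul_log_sub_binomExp_mem_Icc hq hn
  rw [toll, binomExp_comp_sub (q i) n (fun m => m * log m), norm_one, mul_one, norm_eq_abs, abs_le]
  constructor <;> linarith

lemma toll_natCast_mul (b : Fin 2 → ℝ) :
    toll q (fun j n => b j * n) i n = (b i - q i * b 0 - (1 - q i) * b 1) * n := by
  simp only [toll, binomExp_const_mul, binomExp_natCast, binomExp_comp_sub (q i) n Nat.cast]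
  ring

/-- Solvability of the Poisson equation: the stationary distribution is proportional to
`(q 1, 1 - q 0)`. -/
lemma exists_toll_natCast_mul_eq (hq : q 1 ≠ 0) (g : Fin 2 → ℝ)
    (hg : q 1 * g 0 + (1 - q 0) * g 1 = 0) :
    ∃ b : Fin 2 → ℝ, ∀ i n, toll q (fun j n => b j * n) i n = g i * n := by
  refine ⟨![0, g 1 / q 1], Fin.forall_fin_two.2 ⟨fun n => ?_, fun n => ?_⟩⟩ <;>
    simp only [toll_natCast_mul, Matrix.cons_val_zero, Matrix.cons_val_one]
  · rw [eq_div_of_mul_eq hq (by linear_combination hg : g 0 * q 1 = -(1 - q 0) * g 1)]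
    ring
  · field_simp
    ring

lemma abs_le_binomExp_add_abs_toll {f : Fin 2 → ℕ → ℝ} {G : ℕ → ℝ}
    (hq : q i ∈ Set.Icc (0 : ℝ) 1) (hfG : ∀ j n, |f j n| ≤ G n) :
    |f i n| ≤ binomExp (q i) n (fun k => G k + G (n - k)) + |toll q f i n| := by
  have hsplit : f i n = binomExp (q i) n (f 0) + binomExp (q i) n (fun k => f 1 (n - k)) +
      toll q f i n := by rw [toll]; ring
  rw [hsplit, binomExp_add]
  refine (abs_add_three _ _ _).trans (add_le_add (add_le_add ?_ ?_) le_rfl)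
  · exact (abs_binomExp_le hq _).trans (binomExp_mono hq fun k _ => hfG 0 k)
  · exact (abs_binomExp_le hq _).trans (binomExp_mono hq fun k _ => hfG 1 (n - k))

theorem isBigO_of_isBigO_toll (hq : ∀ i, q i ∈ Set.Ioo (0 : ℝ) 1) {f : Fin 2 → ℕ → ℝ} {γ : ℝ}
    (hγ : γ < 1) (hf : ∀ i, (fun n => toll q f i n) =O[atTop] fun n => (n : ℝ) ^ γ) (i : Fin 2) :
    f i =O[atTop] fun n => (n : ℝ) := by
  obtain ⟨A, hA⟩ := (isBigO_pi.2 hf).bound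
  set G : ℕ → ℝ := fun n => max |f 0 n| |f 1 n|
  have hfG : ∀ j n, |f j n| ≤ G n := by intro j n; fin_cases j <;> simp [G]
  set ρ := min (q 0 * (1 - q 0)) (q 1 * (1 - q 1))
  have hρq : ∀ j, ρ ≤ q j * (1 - q j) := by
    intro j; fin_cases j
    exacts [min_le_left _ _, min_le_right _ _]
  have hρ : 0 < ρ := lt_min (mul_pos (hq 0).1 (sub_pos.2 (hq 0).2))
    (mul_pos (hq 1).1 (sub_pos.2 (hq 1).2))
  obtain ⟨K, hK⟩ := exists_le_mul_of_le_binomExp hρ hγ (A := A) (G := G) <| by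
    filter_upwards [hA] with n hn
    obtain ⟨j, hj⟩ : ∃ j, G n = |f j n| :=
      (max_choice |f 0 n| |f 1 n|).elim (⟨0, ·⟩) (⟨1, ·⟩)
    refine ⟨q j, hρq j, hj ▸
      (abs_le_binomExp_add_abs_toll (Set.Ioo_subset_Icc_self (hq j)) hfG).trans
        (add_le_add le_rfl ?_)⟩
    rw [norm_of_nonneg (rpow_nonneg n.cast_nonneg γ)] at hn
    exact (norm_le_pi_norm (fun i => toll q f i n) j).trans hn
  refine IsBigO.of_bound K ?_
  filter_upwards [eventually_ge_atTop 1] with n hn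
  rw [norm_eq_abs, norm_of_nonneg n.cast_nonneg]
  exact (hfG i n).trans (hK n hn)

end toll

theorem stmt1 (p : Fin 2 → Fin 2 → ℝ)
    (hp : ∀ i j, p i j ∈ Set.Ioo (0 : ℝ) 1)
    (hsum : ∀ i, p i 0 + p i 1 = 1)
    (pi' H' : Fin 2 → ℝ) (H : ℝ)
    (hpi0 : pi' 0 = p 1 0 / (p 0 1 + p 1 0))
    (hpi1 : pi' 1 = p 0 1 / (p 0 1 + p 1 0))
    (hH' : ∀ i, H' i = -(p i 0 * Real.log (p i 0)) - p i 1 * Real.log (p i 1))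
    (hH : H = pi' 0 * H' 0 + pi' 1 * H' 1) (hHpos : 0 < H)
    (a ε : Fin 2 → ℕ → ℝ) (c : Fin 2 → ℝ) (α : ℝ) (hα : α < 1)
    (hrec : ∀ i : Fin 2, ∀ n : ℕ, 1 ≤ n →
      a i n = binomExp (p i 0) n (a 0) + binomExp (p i 0) n (fun k => a 1 (n - k)) + ε i n)
    (hε : ∀ i : Fin 2,
      (fun n : ℕ => ε i n - c i * n) =O[atTop] (fun n : ℕ => (n : ℝ) ^ α)) :
    ∀ i : Fin 2,
      (fun n : ℕ => a i n - (pi' 0 * c 0 + pi' 1 * c 1) / H * ((n : ℝ) * Real.log n))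
        =O[atTop] (fun n : ℕ => (n : ℝ)) := by
  set q : Fin 2 → ℝ := fun i => p i 0
  set C := (pi' 0 * c 0 + pi' 1 * c 1) / H
  have hH'q : ∀ i, H' i = binEntropy (q i) := fun i => by
    rw [hH', binEntropy, log_inv, log_inv, show p i 1 = 1 - p i 0 by linarith [hsum i]]; ring
  have hstat : q 1 * (c 0 - C * H' 0) + (1 - q 0) * (c 1 - C * H' 1) = 0 := by
    have hS : p 0 1 + p 1 0 ≠ 0 := by linarith [(hp 0 1).1, (hp 1 0).1]
    have hCH : C * H = pi' 0 * c 0 + pi' 1 * c 1 := div_mul_cancel₀ _ hHpos.ne'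
    rw [hpi0, hpi1] at hCH hH
    simp only [q, show 1 - p 0 0 = p 0 1 by linarith [hsum 0]]
    field_simp at hCH hH
    linear_combination C * hH - hCH
  obtain ⟨b, hb⟩ := exists_toll_natCast_mul_eq (hp 1 0).1.ne' (fun i => c i - C * H' i) hstat
  set f : Fin 2 → ℕ → ℝ := fun j n => a j n - (C * (n * log n) + b j * n)
  have hf : ∀ i, (fun n => toll q f i n) =O[atTop] fun n => (n : ℝ) ^ max α 0 := by
    intro i
    have hone : (fun _ : ℕ => (1 : ℝ)) =O[atTop] fun n => (n : ℝ) ^ max α 0 := by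
      simpa using isBigO_natCast_rpow_rpow (le_max_right α 0)
    refine (((hε i).trans (isBigO_natCast_rpow_rpow (le_max_left α 0))).sub
      (((toll_mul_log_sub_isBigO_one (q := q) (hp i 0)).trans hone).const_mul_left C)).congr' ?_
      EventuallyEq.rfl
    filter_upwards [eventually_ge_atTop 1] with n hn
    have hta : toll q a i n = ε i n := by rw [toll, hrec i n hn]; ring
    rw [toll_sub, toll_add, toll_const_mul, hb, hta, hH'q]
    ring
  intro i
  refine ((isBigO_of_isBigO_toll (fun i => hp i 0) (max_lt hα one_pos) hf i).add
    ((isBigO_refl _ _).const_mul_left (b i))).congr_left fun n => ?_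
  simp only [f]
  ring
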